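/- arXiv:2509.01256 — 2 statements merged into one kernel-verified Lean document; each statement's English description precedes it below -/
import Mathlib

section
/- Let X be a proper metric space, let G be a connected simple graph on a finite nonempty vertex set V, let c : E(G) → ℝ assign a strictly positive weight to each edge, let v₀ ∈ V, let K ⊆ X be compact, and let R ≥ 0. Then the set of maps f : V → X such that f(v₀) ∈ K and the discrete Dirichlet energy D_c(f) = (1/2)·Σ_{{i,j}∈E(G)} c_{ij}·dist(f(i), f(j))² satisfies D_c(f) ≤ R is a compact subset of the product space X^V. (In particular, the discrete Dirichlet energy is a proper functional on the space of maps whose value at v₀ is constrained to a compact set.) -/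
open Finset

/-- The discrete Dirichlet energy of a map `f : V → X` with respect to edge
weights `c`, summed over the edge set of the graph `G`. -/
noncomputable def discreteDirichletEnergy {V : Type*} [Fintype V]
    {X : Type*} [MetricSpace X]
    (G : SimpleGraph V) [DecidableRel G.Adj] (c : Sym2 V → ℝ) (f : V → X) : ℝ :=
  (1 / 2) * ∑ e ∈ G.edgeFinset,
    c e * Sym2.lift ⟨fun i j => dist (f i) (f j) ^ 2, fun i j => by simp [dist_comm]⟩ e

/-- On a proper metric space, the sublevel sets of the discrete Dirichlet
energy, with one vertex constrained to a compact set, are compact in the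
product topology. -/
theorem discreteDirichletEnergy_sublevel_isCompact
    {X : Type*} [MetricSpace X] [ProperSpace X]
    {V : Type*} [Fintype V] [Nonempty V]
    (G : SimpleGraph V) [DecidableRel G.Adj] (hG : G.Connected)
    (c : Sym2 V → ℝ) (hc : ∀ e ∈ G.edgeSet, 0 < c e)
    (v₀ : V) (K : Set X) (hK : IsCompact K) (R : ℝ) (hR : 0 ≤ R) :
    IsCompact {f : V → X | f v₀ ∈ K ∧ discreteDirichletEnergy G c f ≤ R} := by
  classical
  set g : Sym2 V → ℝ := fun e => Real.sqrt (2 * R / c e) with hg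
  set M : ℝ := ∑ e ∈ G.edgeFinset, g e with hM
  -- each edge term of the energy is nonnegative
  have hterm_nn : ∀ (f : V → X) (e : Sym2 V), e ∈ G.edgeFinset →
      0 ≤ c e * Sym2.lift ⟨fun i j => dist (f i) (f j) ^ 2,
        fun i j => by simp [dist_comm]⟩ e := by
    intro f e he
    induction e using Sym2.ind with
    | _ a b =>
      have hce : 0 < c s(a, b) := hc _ (SimpleGraph.mem_edgeFinset.mp he)
      have : (0:ℝ) ≤ dist (f a) (f b) ^ 2 := sq_nonneg _
      simpa using mul_nonneg hce.le this
  -- the key per-edge bound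
  have key : ∀ f : V → X, discreteDirichletEnergy G c f ≤ R →
      ∀ a b, G.Adj a b → dist (f a) (f b) ≤ g s(a, b) := by
    intro f hf a b hab
    have he : s(a, b) ∈ G.edgeFinset := SimpleGraph.mem_edgeFinset.mpr hab
    have hce : 0 < c s(a, b) := hc _ hab
    have h1 : c s(a, b) * dist (f a) (f b) ^ 2 ≤
        ∑ e ∈ G.edgeFinset, c e * Sym2.lift ⟨fun i j => dist (f i) (f j) ^ 2,
          fun i j => by simp [dist_comm]⟩ e := by
      have := Finset.single_le_sum (f := fun e => c e * Sym2.lift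
        ⟨fun i j => dist (f i) (f j) ^ 2, fun i j => by simp [dist_comm]⟩ e)
        (fun e he => hterm_nn f e he) he
      simpa using this
    have h2 : c s(a, b) * dist (f a) (f b) ^ 2 ≤ 2 * R := by
      have hs : ∑ e ∈ G.edgeFinset, c e * Sym2.lift ⟨fun i j => dist (f i) (f j) ^ 2,
          fun i j => by simp [dist_comm]⟩ e ≤ 2 * R := by
        have := hf
        unfold discreteDirichletEnergy at this
        linarith
      linarith
    have h3 : dist (f a) (f b) ^ 2 ≤ 2 * R / c s(a, b) :=
      (le_div_iff₀ hce).mpr (by linarith [h2])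
    calc dist (f a) (f b) = Real.sqrt (dist (f a) (f b) ^ 2) :=
          (Real.sqrt_sq dist_nonneg).symm
      _ ≤ Real.sqrt (2 * R / c s(a, b)) := Real.sqrt_le_sqrt h3
      _ = g s(a, b) := rfl
  -- bound along walks
  have walkbound : ∀ f : V → X, discreteDirichletEnergy G c f ≤ R →
      ∀ {u v : V} (p : G.Walk u v), dist (f u) (f v) ≤ (p.edges.map g).sum := by
    intro f hf u v p
    induction p with
    | nil => simp
    | @cons u w v h p ih =>
      simp only [SimpleGraph.Walk.edges_cons, List.map_cons, List.sum_cons]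
      calc dist (f u) (f v) ≤ dist (f u) (f w) + dist (f w) (f v) :=
            dist_triangle _ _ _
        _ ≤ g s(u, w) + (p.edges.map g).sum := add_le_add (key f hf _ _ h) ih
  have hgnn : ∀ e, 0 ≤ g e := fun e => Real.sqrt_nonneg _
  -- the sublevel set sits in a compact box
  have hsub : {f : V → X | f v₀ ∈ K ∧ discreteDirichletEnergy G c f ≤ R} ⊆
      Set.pi Set.univ (fun _ : V => Metric.cthickening M K) := by
    rintro f ⟨hf0, hfE⟩ v -
    obtain ⟨q⟩ := hG v₀ v
    set p := q.bypass with hp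
    have hpath : p.IsPath := q.bypass_isPath
    have hnodup : p.edges.Nodup := hpath.edges_nodup
    have hdist : dist (f v₀) (f v) ≤ (p.edges.map g).sum := walkbound f hfE p
    have hle : (p.edges.map g).sum ≤ M := by
      rw [← List.sum_toFinset _ hnodup]
      refine Finset.sum_le_sum_of_subset_of_nonneg ?_ (fun e _ _ => hgnn e)
      intro e he
      rw [List.mem_toFinset] at he
      exact SimpleGraph.mem_edgeFinset.mpr (p.edges_subset_edgeSet he)
    exact Metric.mem_cthickening_of_dist_le (f v) (f v₀) M K hf0
      (by rw [dist_comm]; exact hdist.trans hle)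
  -- the sublevel set is closed
  have hcont : Continuous (fun f : V → X => discreteDirichletEnergy G c f) := by
    unfold discreteDirichletEnergy
    refine continuous_const.mul (continuous_finset_sum _ fun e he => ?_)
    induction e using Sym2.ind with
    | _ a b =>
      simp only [Sym2.lift_mk]
      exact continuous_const.mul
        (((continuous_apply a).dist (continuous_apply b)).pow 2)
  have hclosed : IsClosed {f : V → X | f v₀ ∈ K ∧ discreteDirichletEnergy G c f ≤ R} := by
    have h1 : IsClosed {f : V → X | f v₀ ∈ K} :=
      hK.isClosed.preimage (continuous_apply v₀)
    have h2 : IsClosed {f : V → X | discreteDirichletEnergy G c f ≤ R} :=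
      isClosed_le hcont continuous_const
    exact h1.inter h2
  exact (isCompact_univ_pi fun _ => hK.cthickening).of_isClosed_subset hclosed hsub
end

section
/- Let V and F be finite nonempty sets (vertices and faces), let nE be a natural number (the number of edges) with 2·nE = 3·|F|, let α : F × Fin 3 → ℝ assign a corner angle to each corner of each face, let vtx : F × Fin 3 → V assign a vertex to each corner, and let s : F → ℝ (signed areas). Assume: (i) for every vertex i ∈ V, the sum of α over all corners (f,k) with vtx(f,k) = i is at least 2π; (ii) for every face f ∈ F, π − (α(f,0) + α(f,1) + α(f,2)) ≥ s(f); and (iii) Σ_{f∈F} s(f) = −2π·χ, where χ = |V| − nE + |F| (as an integer). Then for every vertex i ∈ V the sum of α over all corners mapped to i equals exactly 2π, and for every face f ∈ F one has π − (α(f,0) + α(f,1) + α(f,2)) = s(f). -/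
open Finset Real

/-- The rigidity step of the embeddedness argument for discrete harmonic maps:
if `2·|E| = 3·|F|`, the angle sum around every vertex is at least `2π`, every
face satisfies the Gauss–Bonnet inequality `π − (sum of its corner angles) ≥
s(f)`, and the total signed area is `−2πχ` with `χ = |V| − |E| + |F|`, then
the angle sum around every vertex is exactly `2π` and every Gauss–Bonnet
inequality is an equality. -/
theorem discrete_harmonic_unfolded
    {V F : Type*} [Fintype V] [Fintype F] [DecidableEq V]
    [Nonempty V] [Nonempty F]
    (nE : ℕ) (hE : 2 * nE = 3 * Fintype.card F)
    (α : F × Fin 3 → ℝ) (vtx : F × Fin 3 → V) (s : F → ℝ)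
    (h1 : ∀ i : V,
      2 * π ≤ ∑ fk ∈ Finset.univ.filter (fun fk : F × Fin 3 => vtx fk = i), α fk)
    (h2 : ∀ f : F, s f ≤ π - (α (f, 0) + α (f, 1) + α (f, 2)))
    (h3 : ∑ f : F, s f =
      -2 * π * (((Fintype.card V : ℤ) - (nE : ℤ) + (Fintype.card F : ℤ)) : ℝ)) :
    (∀ i : V,
      ∑ fk ∈ Finset.univ.filter (fun fk : F × Fin 3 => vtx fk = i), α fk = 2 * π) ∧
    (∀ f : F, π - (α (f, 0) + α (f, 1) + α (f, 2)) = s f) := by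
  -- total angle
  have E1 : ∑ i : V, ∑ fk ∈ Finset.univ.filter (fun fk : F × Fin 3 => vtx fk = i), α fk
      = ∑ fk : F × Fin 3, α fk := by
    rw [← Finset.sum_fiberwise (g := vtx) (f := α)]
  have E2 : ∑ fk : F × Fin 3, α fk = ∑ f : F, (α (f, 0) + α (f, 1) + α (f, 2)) := by
    rw [Fintype.sum_prod_type]
    exact Finset.sum_congr rfl fun f _ => by
      rw [Fin.sum_univ_three]
  -- sum of h2
  have hE' : 2 * (nE : ℝ) = 3 * (Fintype.card F : ℝ) := by exact_mod_cast hE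
  have key : ∑ i : V, (2 * π) =
      ∑ f : F, (π - s f) := by
    rw [Finset.sum_const, Finset.sum_sub_distrib, Finset.sum_const, h3]
    simp only [card_univ, nsmul_eq_mul]
    push_cast
    nlinarith [pi_pos]
  have hlow : ∑ i : V, (2 * π) ≤
      ∑ i : V, ∑ fk ∈ Finset.univ.filter (fun fk : F × Fin 3 => vtx fk = i), α fk :=
    Finset.sum_le_sum fun i _ => h1 i
  have hup : ∑ f : F, (α (f, 0) + α (f, 1) + α (f, 2)) ≤ ∑ f : F, (π - s f) :=
    Finset.sum_le_sum fun f _ => by linarith [h2 f]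
  have heq1 : ∑ i : V, (2 * π) =
      ∑ i : V, ∑ fk ∈ Finset.univ.filter (fun fk : F × Fin 3 => vtx fk = i), α fk := by
    rw [E1, E2] at hlow ⊢
    linarith
  have heq2 : ∑ f : F, (α (f, 0) + α (f, 1) + α (f, 2)) = ∑ f : F, (π - s f) := by
    rw [E1, E2] at hlow
    linarith
  constructor
  · intro i
    have := (Finset.sum_eq_sum_iff_of_le (fun i _ => h1 i)).mp heq1 i (Finset.mem_univ i)
    exact this.symm
  · intro f
    have := (Finset.sum_eq_sum_iff_of_le (fun f _ => by linarith [h2 f] :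
        ∀ f ∈ Finset.univ, α (f, 0) + α (f, 1) + α (f, 2) ≤ π - s f)).mp heq2 f
        (Finset.mem_univ f)
    linarith
end
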